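/- Meridian surfaces of hyperbolic type with harmonic Gauss map (Theorem 4.2): ΔG = 0 at every point of I × J if and only if either (i) κ ≡ 0 on J and g′ ≡ 0 on I (and then κ_m ≡ 0, the surface is part of a plane), or (ii) there exist constants a > 0 and ε, δ ∈ {−1, 1} such that f ≡ a, g′ ≡ ε on I and κ ≡ δ on J. Moreover, in case (ii) the mean curvature vector H := (1/2)(∂²z/∂u² + (1/f²)·∂²z/∂v² + (f′/f)·∂z/∂u) equals −(1/(2a))·(l + δ·n), and it satisfies ⟨H,H⟩ = 0 and H ≠ 0 at every point (the surface is marginally trapped). -/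

import Mathlib

noncomputable section

/-- The Minkowski inner product on `ℝ⁴` of signature `(3,1)`:
`⟨x,y⟩ = x₁y₁ + x₂y₂ + x₃y₃ − x₄y₄`. -/
def mink (x y : Fin 4 → ℝ) : ℝ :=
  x 0 * y 0 + x 1 * y 1 + x 2 * y 2 - x 3 * y 3

/-- The first standard basis vector `e₁` of `ℝ⁴`. -/
def e1 : Fin 4 → ℝ := fun i => if i = 0 then 1 else 0

/-- The wedge product `a ∧ b`, an antisymmetric `4 × 4` real matrix with entries
`(a ∧ b)_{ij} = aᵢbⱼ − aⱼbᵢ`. -/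
def wedge (a b : Fin 4 → ℝ) : Fin 4 → Fin 4 → ℝ :=
  fun i j => a i * b j - a j * b i

/-- Hyperbolic meridian data in Minkowski 4-space: nonempty open intervals `I, J ⊆ ℝ`,
smooth functions `f, g : I → ℝ` with `f > 0` and `f′² + g′² = 1` on `I`, and smooth maps
`l, n : J → ℝ⁴` with values in the hyperplane `{x₁ = 0}` such that `⟨l,l⟩ ≡ 1`,
`⟨t,t⟩ ≡ 1` where `t := l′`, `⟨n,n⟩ ≡ −1`, `⟨l,n⟩ ≡ 0`, `⟨t,n⟩ ≡ 0` on `J`. -/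
structure HyperbolicData where
  I : Set ℝ
  J : Set ℝ
  hI : IsOpen I
  hJ : IsOpen J
  hIne : I.Nonempty
  hJne : J.Nonempty
  hIconn : I.OrdConnected
  hJconn : J.OrdConnected
  f : ℝ → ℝ
  g : ℝ → ℝ
  hf : ContDiffOn ℝ (⊤ : ℕ∞) f I
  hg : ContDiffOn ℝ (⊤ : ℕ∞) g I
  hfpos : ∀ u ∈ I, 0 < f u
  hunit : ∀ u ∈ I, (deriv f u) ^ 2 + (deriv g u) ^ 2 = 1
  l : ℝ → Fin 4 → ℝ
  n : ℝ → Fin 4 → ℝ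
  hl : ContDiffOn ℝ (⊤ : ℕ∞) l J
  hn : ContDiffOn ℝ (⊤ : ℕ∞) n J
  hlplane : ∀ v ∈ J, l v 0 = 0
  hnplane : ∀ v ∈ J, n v 0 = 0
  hll : ∀ v ∈ J, mink (l v) (l v) = 1
  htt : ∀ v ∈ J, mink (deriv l v) (deriv l v) = 1
  hnn : ∀ v ∈ J, mink (n v) (n v) = -1
  hln : ∀ v ∈ J, mink (l v) (n v) = 0
  htn : ∀ v ∈ J, mink (deriv l v) (n v) = 0

namespace HyperbolicData

variable (d : HyperbolicData)

/-- The unit tangent `t := l′` of the curve `c` on `S²₁(1)`. -/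
def t : ℝ → Fin 4 → ℝ := fun v => deriv d.l v

/-- The spherical curvature `κ := ⟨t′, n⟩` of the curve `c`. -/
def kappa : ℝ → ℝ := fun v => mink (deriv d.t v) (d.n v)

/-- The curvature `κ_m := f′g″ − g′f″` of the meridian curve `m`. -/
def kappaM : ℝ → ℝ := fun u =>
  deriv d.f u * deriv (deriv d.g) u - deriv d.g u * deriv (deriv d.f) u

/-- The meridian surface of hyperbolic type `z(u,v) := f(u)·l(v) + g(u)·e₁`. -/
def z : ℝ → ℝ → Fin 4 → ℝ := fun u v => d.f u • d.l v + d.g u • e1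

/-- The tangent frame vector `x := f′·l + g′·e₁`. -/
def x : ℝ → ℝ → Fin 4 → ℝ := fun u v => deriv d.f u • d.l v + deriv d.g u • e1

/-- The normal frame vector `n₁ := g′·l − f′·e₁`. -/
def n1 : ℝ → ℝ → Fin 4 → ℝ := fun u v => deriv d.g u • d.l v - deriv d.f u • e1

/-- The Gauss map `G := x ∧ y` (with `y = t`). -/
def G : ℝ → ℝ → Fin 4 → Fin 4 → ℝ := fun u v => wedge (d.x u v) (d.t v)

/-- The Laplacian of the Gauss map with respect to the induced metric `du² + f(u)²dv²`:
`ΔG := −(∂²G/∂u² + (1/f²)·∂²G/∂v² + (f′/f)·∂G/∂u)`, computed entrywise. -/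
def lapG : ℝ → ℝ → Fin 4 → Fin 4 → ℝ := fun u v =>
  -(deriv (fun u' => deriv (fun u'' => d.G u'' v) u') u
    + (1 / (d.f u) ^ 2) • deriv (fun v' => deriv (fun v'' => d.G u v'') v') v
    + (deriv d.f u / d.f u) • deriv (fun u' => d.G u' v) u)

/-- The mean curvature vector
`H := (1/2)(∂²z/∂u² + (1/f²)·∂²z/∂v² + (f′/f)·∂z/∂u)`. -/
def H : ℝ → ℝ → Fin 4 → ℝ := fun u v =>
  (1 / 2 : ℝ) • (deriv (fun u' => deriv (fun u'' => d.z u'' v) u') u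
    + (1 / (d.f u) ^ 2) • deriv (fun v' => deriv (fun v'' => d.z u v'') v') v
    + (deriv d.f u / d.f u) • deriv (fun u' => d.z u' v) u)


end HyperbolicData

section AuxHelpers

lemma mink_comm' (a b : Fin 4 → ℝ) : mink a b = mink b a := by simp [mink]; ring

lemma hasDerivAt_mink {F G : ℝ → Fin 4 → ℝ} {F' G' : Fin 4 → ℝ} {v : ℝ}
    (hF : HasDerivAt F F' v) (hG : HasDerivAt G G' v) :
    HasDerivAt (fun w => mink (F w) (G w)) (mink F' (G v) + mink (F v) G') v := by
  have hFi : ∀ i, HasDerivAt (fun w => F w i) (F' i) v := fun i => hasDerivAt_pi.mp hF i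
  have hGi : ∀ i, HasDerivAt (fun w => G w i) (G' i) v := fun i => hasDerivAt_pi.mp hG i
  have h : HasDerivAt (fun w => mink (F w) (G w)) _ v := ((((hFi 0).mul (hGi 0)).add ((hFi 1).mul (hGi 1))).add
      ((hFi 2).mul (hGi 2))).sub ((hFi 3).mul (hGi 3))
  exact h.congr_deriv (by simp [mink]; ring)

lemma hasDerivAt_wedge {F G : ℝ → Fin 4 → ℝ} {F' G' : Fin 4 → ℝ} {v : ℝ}
    (hF : HasDerivAt F F' v) (hG : HasDerivAt G G' v) :
    HasDerivAt (fun w => wedge (F w) (G w)) (wedge F' (G v) + wedge (F v) G') v := by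
  rw [hasDerivAt_pi]; intro i; rw [hasDerivAt_pi]; intro j
  have hFi : ∀ i, HasDerivAt (fun w => F w i) (F' i) v := fun i => hasDerivAt_pi.mp hF i
  have hGi : ∀ i, HasDerivAt (fun w => G w i) (G' i) v := fun i => hasDerivAt_pi.mp hG i
  have h : HasDerivAt (fun w => wedge (F w) (G w) i j) _ v := ((hFi i).mul (hGi j)).sub ((hFi j).mul (hGi i))
  exact h.congr_deriv (by simp [wedge]; ring)

lemma nondeg (L T N w : Fin 4 → ℝ)
    (hL0 : L 0 = 0) (hT0 : T 0 = 0) (hN0 : N 0 = 0) (hw0 : w 0 = 0)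
    (hLL : mink L L = 1) (hTT : mink T T = 1) (hNN : mink N N = -1)
    (hLT : mink L T = 0) (hLN : mink L N = 0) (hTN : mink T N = 0)
    (hwL : mink w L = 0) (hwT : mink w T = 0) (hwN : mink w N = 0) : w = 0 := by
  simp only [mink, hL0, hT0, hN0, hw0, mul_zero, zero_mul, zero_add] at hLL hTT hNN hLT hLN hTN hwL hwT hwN
  set E : Matrix (Fin 3) (Fin 3) ℝ := Matrix.diagonal ![1, 1, -1] with hE
  set M : Matrix (Fin 3) (Fin 3) ℝ :=
    Matrix.of (fun i j => (![L, T, N] j) ((![1, 2, 3] : Fin 3 → Fin 4) i)) with hM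
  have hEE : E * E = 1 := by
    ext i j
    fin_cases i <;> fin_cases j <;>
      simp [hE, Matrix.mul_apply, Fin.sum_univ_three, Matrix.one_apply, Matrix.diagonal]
  have hGram : M.transpose * E * M = E := by
    ext i j
    fin_cases i <;> fin_cases j <;>
      (simp [hM, hE, Matrix.mul_apply, Fin.sum_univ_three, Matrix.diagonal]) <;>
      linarith
  have h1 : (E * M.transpose * E) * M = 1 := by
    calc (E * M.transpose * E) * M = E * (M.transpose * E * M) := by
          simp only [Matrix.mul_assoc]
      _ = E * E := by rw [hGram]
      _ = 1 := hEE
  have h2 : M * (E * M.transpose * E) = 1 := mul_eq_one_comm.mp h1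
  have h3 : M * (E * M.transpose) = E := by
    have h4 := congrArg (fun X => X * E) h2
    simp only [Matrix.mul_assoc, hEE, Matrix.mul_one, Matrix.one_mul] at h4
    simpa [Matrix.mul_assoc] using h4
  have hid : ∀ i j : Fin 3,
      L (![1,2,3] i) * L (![1,2,3] j) + T (![1,2,3] i) * T (![1,2,3] j)
        - N (![1,2,3] i) * N (![1,2,3] j) = E i j := by
    intro i j
    have h4 := congrFun (congrFun h3 i) j
    fin_cases i <;> fin_cases j <;>
      (simp [hM, hE, Matrix.mul_apply, Fin.sum_univ_three, Matrix.diagonal] at h4 ⊢) <;>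
      linarith
  have e00 := hid 0 0; have e01 := hid 0 1; have e02 := hid 0 2
  have e10 := hid 1 0; have e11 := hid 1 1; have e12 := hid 1 2
  have e20 := hid 2 0; have e21 := hid 2 1; have e22 := hid 2 2
  simp [hE, Matrix.diagonal] at e00 e01 e02 e10 e11 e12 e20 e21 e22
  funext i
  fin_cases i
  · exact hw0
  · show w 1 = 0
    linear_combination -(w 1 * e00) - w 2 * e01 + w 3 * e02 + L 1 * hwL + T 1 * hwT - N 1 * hwN
  · show w 2 = 0
    linear_combination -(w 1 * e10) - w 2 * e11 + w 3 * e12 + L 2 * hwL + T 2 * hwT - N 2 * hwN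
  · show w 3 = 0
    linear_combination -(w 1 * e20) - w 2 * e21 + w 3 * e22 + L 3 * hwL + T 3 * hwT - N 3 * hwN

/-- Pairing functional used to extract coefficients from matrix identities. -/
def phi4 (c dd : Fin 4 → ℝ) (M : Fin 4 → Fin 4 → ℝ) : ℝ :=
  ∑ i : Fin 4, ∑ j : Fin 4, M i j * (if i = 3 then -c i else c i) * (if j = 3 then -dd j else dd j)

lemma phi4_wedge (c dd a b : Fin 4 → ℝ) :
    phi4 c dd (wedge a b) = mink a c * mink b dd - mink b c * mink a dd := by
  simp [phi4, wedge, mink, Fin.sum_univ_four]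
  ring

lemma phi4_five (c dd : Fin 4 → ℝ) (A B C D E : ℝ) (M1 M2 M3 M4 M5 : Fin 4 → Fin 4 → ℝ) :
    phi4 c dd (A • M1 + B • M2 + C • M3 + D • M4 + E • M5)
      = A * phi4 c dd M1 + B * phi4 c dd M2 + C * phi4 c dd M3 + D * phi4 c dd M4
        + E * phi4 c dd M5 := by
  simp [phi4, Fin.sum_univ_four]
  ring

lemma phi4_zero (c dd : Fin 4 → ℝ) : phi4 c dd 0 = 0 := by simp [phi4]

lemma constOn {F : ℝ → ℝ} {S : Set ℝ} (hS : IsOpen S) (hconv : Convex ℝ S)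
    (hdiff : ∀ x ∈ S, DifferentiableAt ℝ F x) (hz : ∀ x ∈ S, deriv F x = 0)
    {x y : ℝ} (hx : x ∈ S) (hy : y ∈ S) : F x = F y := by
  apply hconv.is_const_of_fderivWithin_eq_zero
    (fun w hw => (hdiff w hw).differentiableWithinAt) ?_ hx hy
  intro z hz'
  rw [fderivWithin_of_isOpen hS hz']
  have h0 : HasDerivAt F 0 z := by
    have h := (hdiff z hz').hasDerivAt
    rwa [hz z hz'] at h
  rw [(hasDerivAt_iff_hasFDerivAt.mp h0).fderiv]
  ext y
  simp

lemma deriv_zero_of_eqOn {F : ℝ → ℝ} {S : Set ℝ} (hS : IsOpen S) {c : ℝ}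
    (h : ∀ x ∈ S, F x = c) {x : ℝ} (hx : x ∈ S) : deriv F x = 0 := by
  have he : F =ᶠ[nhds x] fun _ => c := Filter.eventuallyEq_of_mem (hS.mem_nhds hx) h
  rw [he.deriv_eq, deriv_const]

lemma pm_one_eq {r : ℝ} (h : r ^ 2 = 1) : r = -1 ∨ r = 1 := by
  have h1 : (r - 1) * (r + 1) = 0 := by linear_combination h
  rcases mul_eq_zero.mp h1 with h2 | h2
  · right; linarith
  · left; linarith

lemma pm_one_const {F : ℝ → ℝ} {S : Set ℝ} (hconn : S.OrdConnected)
    (hcont : ContinuousOn F S) (h2 : ∀ x ∈ S, F x ^ 2 = 1)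
    {x y : ℝ} (hx : x ∈ S) (hy : y ∈ S) : F x = F y := by
  by_contra hne
  have hsub : Set.uIcc x y ⊆ S := hconn.uIcc_subset hx hy
  have hivt := intermediate_value_uIcc (hcont.mono hsub)
  have hx2 := pm_one_eq (h2 x hx)
  have hy2 := pm_one_eq (h2 y hy)
  have h0 : (0:ℝ) ∈ Set.uIcc (F x) (F y) := by
    rcases hx2 with h | h <;> rcases hy2 with h' | h' <;>
      first
        | (exfalso; rw [h, h'] at hne; exact hne rfl)
        | (rw [h, h']; rw [Set.mem_uIcc]; norm_num)
  obtain ⟨c, hc, hc0⟩ := hivt h0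
  have := h2 c (hsub hc)
  rw [hc0] at this
  norm_num at this

end AuxHelpers

namespace HyperbolicData

variable (d : HyperbolicData)

lemma f_diffAt {u : ℝ} (hu : u ∈ d.I) : DifferentiableAt ℝ d.f u :=
  (d.hf.contDiffAt (d.hI.mem_nhds hu)).differentiableAt (by simp)

lemma g_diffAt {u : ℝ} (hu : u ∈ d.I) : DifferentiableAt ℝ d.g u :=
  (d.hg.contDiffAt (d.hI.mem_nhds hu)).differentiableAt (by simp)

lemma df_smooth : ContDiffOn ℝ (⊤ : ℕ∞) (deriv d.f) d.I := d.hf.deriv_of_isOpen d.hI (by simp)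

lemma dg_smooth : ContDiffOn ℝ (⊤ : ℕ∞) (deriv d.g) d.I := d.hg.deriv_of_isOpen d.hI (by simp)

lemma df_diffAt {u : ℝ} (hu : u ∈ d.I) : DifferentiableAt ℝ (deriv d.f) u :=
  (d.df_smooth.contDiffAt (d.hI.mem_nhds hu)).differentiableAt (by simp)

lemma dg_diffAt {u : ℝ} (hu : u ∈ d.I) : DifferentiableAt ℝ (deriv d.g) u :=
  (d.dg_smooth.contDiffAt (d.hI.mem_nhds hu)).differentiableAt (by simp)

lemma d2f_smooth : ContDiffOn ℝ (⊤ : ℕ∞) (deriv (deriv d.f)) d.I :=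
  d.df_smooth.deriv_of_isOpen d.hI (by simp)

lemma d2g_smooth : ContDiffOn ℝ (⊤ : ℕ∞) (deriv (deriv d.g)) d.I :=
  d.dg_smooth.deriv_of_isOpen d.hI (by simp)

lemma d2f_diffAt {u : ℝ} (hu : u ∈ d.I) : DifferentiableAt ℝ (deriv (deriv d.f)) u :=
  (d.d2f_smooth.contDiffAt (d.hI.mem_nhds hu)).differentiableAt (by simp)

lemma d2g_diffAt {u : ℝ} (hu : u ∈ d.I) : DifferentiableAt ℝ (deriv (deriv d.g)) u :=
  (d.d2g_smooth.contDiffAt (d.hI.mem_nhds hu)).differentiableAt (by simp)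

lemma l_diffAt {v : ℝ} (hv : v ∈ d.J) : DifferentiableAt ℝ d.l v :=
  (d.hl.contDiffAt (d.hJ.mem_nhds hv)).differentiableAt (by simp)

lemma n_diffAt {v : ℝ} (hv : v ∈ d.J) : DifferentiableAt ℝ d.n v :=
  (d.hn.contDiffAt (d.hJ.mem_nhds hv)).differentiableAt (by simp)

lemma t_smooth : ContDiffOn ℝ (⊤ : ℕ∞) d.t d.J := d.hl.deriv_of_isOpen d.hJ (by simp)

lemma t_diffAt {v : ℝ} (hv : v ∈ d.J) : DifferentiableAt ℝ d.t v :=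
  (d.t_smooth.contDiffAt (d.hJ.mem_nhds hv)).differentiableAt (by simp)

lemma dt_smooth : ContDiffOn ℝ (⊤ : ℕ∞) (deriv d.t) d.J := d.t_smooth.deriv_of_isOpen d.hJ (by simp)

lemma dt_diffAt {v : ℝ} (hv : v ∈ d.J) : DifferentiableAt ℝ (deriv d.t) v :=
  (d.dt_smooth.contDiffAt (d.hJ.mem_nhds hv)).differentiableAt (by simp)

lemma t_zero {v : ℝ} (hv : v ∈ d.J) : d.t v 0 = 0 := by
  have h1 : deriv (fun w => d.l w 0) v = d.t v 0 :=
    (hasDerivAt_pi.mp (d.l_diffAt hv).hasDerivAt 0).deriv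
  rw [← h1]
  have he : (fun w => d.l w 0) =ᶠ[nhds v] fun _ => 0 :=
    Filter.eventuallyEq_of_mem (d.hJ.mem_nhds hv) d.hlplane
  rw [he.deriv_eq, deriv_const]

lemma dt_zero {v : ℝ} (hv : v ∈ d.J) : deriv d.t v 0 = 0 := by
  have h1 : deriv (fun w => d.t w 0) v = deriv d.t v 0 :=
    (hasDerivAt_pi.mp (d.t_diffAt hv).hasDerivAt 0).deriv
  rw [← h1]
  have he : (fun w => d.t w 0) =ᶠ[nhds v] fun _ => 0 :=
    Filter.eventuallyEq_of_mem (d.hJ.mem_nhds hv) (fun w hw => d.t_zero hw)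
  rw [he.deriv_eq, deriv_const]

lemma dn_zero {v : ℝ} (hv : v ∈ d.J) : deriv d.n v 0 = 0 := by
  have h1 : deriv (fun w => d.n w 0) v = deriv d.n v 0 :=
    (hasDerivAt_pi.mp (d.n_diffAt hv).hasDerivAt 0).deriv
  rw [← h1]
  have he : (fun w => d.n w 0) =ᶠ[nhds v] fun _ => 0 :=
    Filter.eventuallyEq_of_mem (d.hJ.mem_nhds hv) d.hnplane
  rw [he.deriv_eq, deriv_const]

lemma mink_lt {v : ℝ} (hv : v ∈ d.J) : mink (d.l v) (d.t v) = 0 := by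
  have h1 : HasDerivAt (fun w => mink (d.l w) (d.l w))
      (mink (d.t v) (d.l v) + mink (d.l v) (d.t v)) v :=
    hasDerivAt_mink (d.l_diffAt hv).hasDerivAt (d.l_diffAt hv).hasDerivAt
  have h0 : deriv (fun w => mink (d.l w) (d.l w)) v = 0 := by
    have he : (fun w => mink (d.l w) (d.l w)) =ᶠ[nhds v] fun _ => (1:ℝ) :=
      Filter.eventuallyEq_of_mem (d.hJ.mem_nhds hv) d.hll
    rw [he.deriv_eq, deriv_const]
  rw [h1.deriv] at h0
  have h3 := mink_comm' (d.t v) (d.l v)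
  linarith

lemma mink_l_dt {v : ℝ} (hv : v ∈ d.J) : mink (d.l v) (deriv d.t v) = -1 := by
  have h1 : HasDerivAt (fun w => mink (d.l w) (d.t w))
      (mink (d.t v) (d.t v) + mink (d.l v) (deriv d.t v)) v :=
    hasDerivAt_mink (d.l_diffAt hv).hasDerivAt (d.t_diffAt hv).hasDerivAt
  have h0 : deriv (fun w => mink (d.l w) (d.t w)) v = 0 := by
    have he : (fun w => mink (d.l w) (d.t w)) =ᶠ[nhds v] fun _ => (0:ℝ) :=
      Filter.eventuallyEq_of_mem (d.hJ.mem_nhds hv) (fun w hw => d.mink_lt hw)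
    rw [he.deriv_eq, deriv_const]
  rw [h1.deriv] at h0
  have htt : mink (d.t v) (d.t v) = 1 := d.htt v hv
  linarith

lemma mink_t_dt {v : ℝ} (hv : v ∈ d.J) : mink (d.t v) (deriv d.t v) = 0 := by
  have h1 : HasDerivAt (fun w => mink (d.t w) (d.t w))
      (mink (deriv d.t v) (d.t v) + mink (d.t v) (deriv d.t v)) v :=
    hasDerivAt_mink (d.t_diffAt hv).hasDerivAt (d.t_diffAt hv).hasDerivAt
  have h0 : deriv (fun w => mink (d.t w) (d.t w)) v = 0 := by
    have he : (fun w => mink (d.t w) (d.t w)) =ᶠ[nhds v] fun _ => (1:ℝ) :=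
      Filter.eventuallyEq_of_mem (d.hJ.mem_nhds hv) (fun w hw => d.htt w hw)
    rw [he.deriv_eq, deriv_const]
  rw [h1.deriv] at h0
  have h3 := mink_comm' (deriv d.t v) (d.t v)
  linarith

lemma mink_l_dn {v : ℝ} (hv : v ∈ d.J) : mink (d.l v) (deriv d.n v) = 0 := by
  have h1 : HasDerivAt (fun w => mink (d.l w) (d.n w))
      (mink (d.t v) (d.n v) + mink (d.l v) (deriv d.n v)) v :=
    hasDerivAt_mink (d.l_diffAt hv).hasDerivAt (d.n_diffAt hv).hasDerivAt
  have h0 : deriv (fun w => mink (d.l w) (d.n w)) v = 0 := by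
    have he : (fun w => mink (d.l w) (d.n w)) =ᶠ[nhds v] fun _ => (0:ℝ) :=
      Filter.eventuallyEq_of_mem (d.hJ.mem_nhds hv) (fun w hw => d.hln w hw)
    rw [he.deriv_eq, deriv_const]
  rw [h1.deriv] at h0
  have htn : mink (d.t v) (d.n v) = 0 := d.htn v hv
  linarith

lemma kappa_def {v : ℝ} : d.kappa v = mink (deriv d.t v) (d.n v) := rfl

lemma mink_t_dn {v : ℝ} (hv : v ∈ d.J) : mink (d.t v) (deriv d.n v) = -(d.kappa v) := by
  have h1 : HasDerivAt (fun w => mink (d.t w) (d.n w))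
      (mink (deriv d.t v) (d.n v) + mink (d.t v) (deriv d.n v)) v :=
    hasDerivAt_mink (d.t_diffAt hv).hasDerivAt (d.n_diffAt hv).hasDerivAt
  have h0 : deriv (fun w => mink (d.t w) (d.n w)) v = 0 := by
    have he : (fun w => mink (d.t w) (d.n w)) =ᶠ[nhds v] fun _ => (0:ℝ) :=
      Filter.eventuallyEq_of_mem (d.hJ.mem_nhds hv) (fun w hw => d.htn w hw)
    rw [he.deriv_eq, deriv_const]
  rw [h1.deriv] at h0
  rw [d.kappa_def]
  linarith

lemma mink_n_dn {v : ℝ} (hv : v ∈ d.J) : mink (d.n v) (deriv d.n v) = 0 := by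
  have h1 : HasDerivAt (fun w => mink (d.n w) (d.n w))
      (mink (deriv d.n v) (d.n v) + mink (d.n v) (deriv d.n v)) v :=
    hasDerivAt_mink (d.n_diffAt hv).hasDerivAt (d.n_diffAt hv).hasDerivAt
  have h0 : deriv (fun w => mink (d.n w) (d.n w)) v = 0 := by
    have he : (fun w => mink (d.n w) (d.n w)) =ᶠ[nhds v] fun _ => (-1:ℝ) :=
      Filter.eventuallyEq_of_mem (d.hJ.mem_nhds hv) (fun w hw => d.hnn w hw)
    rw [he.deriv_eq, deriv_const]
  rw [h1.deriv] at h0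
  have h3 := mink_comm' (deriv d.n v) (d.n v)
  linarith

lemma frenet_t {v : ℝ} (hv : v ∈ d.J) :
    deriv d.t v = fun i => -(d.l v i) - d.kappa v * d.n v i := by
  set w : Fin 4 → ℝ := fun i => deriv d.t v i + d.l v i + d.kappa v * d.n v i with hwdef
  have hw : w = 0 := by
    have htl : mink (d.t v) (d.l v) = 0 := by rw [mink_comm']; exact d.mink_lt hv
    have hnl : mink (d.n v) (d.l v) = 0 := by rw [mink_comm']; exact d.hln v hv
    have hnt : mink (d.n v) (d.t v) = 0 := by rw [mink_comm']; exact d.htn v hv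
    apply nondeg (d.l v) (d.t v) (d.n v) w (d.hlplane v hv) (d.t_zero hv) (d.hnplane v hv)
      ?_ (d.hll v hv) (d.htt v hv) (d.hnn v hv) (d.mink_lt hv) (d.hln v hv) (d.htn v hv) ?_ ?_ ?_
    · show w 0 = 0
      simp [hwdef, d.dt_zero hv, d.hlplane v hv, d.hnplane v hv]
    · have hexp : mink w (d.l v) = mink (deriv d.t v) (d.l v) + mink (d.l v) (d.l v)
          + d.kappa v * mink (d.n v) (d.l v) := by
        simp [hwdef, mink]; ring
      rw [hexp, mink_comm' (deriv d.t v) (d.l v), d.mink_l_dt hv, d.hll v hv, hnl]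
      ring
    · have hexp : mink w (d.t v) = mink (deriv d.t v) (d.t v) + mink (d.l v) (d.t v)
          + d.kappa v * mink (d.n v) (d.t v) := by
        simp [hwdef, mink]; ring
      rw [hexp, mink_comm' (deriv d.t v) (d.t v), d.mink_t_dt hv, d.mink_lt hv, hnt]
      ring
    · have hexp : mink w (d.n v) = mink (deriv d.t v) (d.n v) + mink (d.l v) (d.n v)
          + d.kappa v * mink (d.n v) (d.n v) := by
        simp [hwdef, mink]; ring
      rw [hexp, ← d.kappa_def, d.hln v hv, d.hnn v hv]
      ring
  funext i
  have h := congrFun hw i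
  simp only [hwdef, Pi.zero_apply] at h
  linarith

lemma frenet_n {v : ℝ} (hv : v ∈ d.J) :
    deriv d.n v = fun i => -(d.kappa v * d.t v i) := by
  set w : Fin 4 → ℝ := fun i => deriv d.n v i + d.kappa v * d.t v i with hwdef
  have hw : w = 0 := by
    have htl : mink (d.t v) (d.l v) = 0 := by rw [mink_comm']; exact d.mink_lt hv
    apply nondeg (d.l v) (d.t v) (d.n v) w (d.hlplane v hv) (d.t_zero hv) (d.hnplane v hv)
      ?_ (d.hll v hv) (d.htt v hv) (d.hnn v hv) (d.mink_lt hv) (d.hln v hv) (d.htn v hv) ?_ ?_ ?_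
    · show w 0 = 0
      simp [hwdef, d.dn_zero hv, d.t_zero hv]
    · have hexp : mink w (d.l v) = mink (deriv d.n v) (d.l v)
          + d.kappa v * mink (d.t v) (d.l v) := by
        simp [hwdef, mink]; ring
      rw [hexp, mink_comm' (deriv d.n v) (d.l v), d.mink_l_dn hv, htl]
      ring
    · have hexp : mink w (d.t v) = mink (deriv d.n v) (d.t v)
          + d.kappa v * mink (d.t v) (d.t v) := by
        simp [hwdef, mink]; ring
      have htt' : mink (d.t v) (d.t v) = 1 := d.htt v hv
      rw [hexp, mink_comm' (deriv d.n v) (d.t v), d.mink_t_dn hv, htt']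
      ring
    · have hexp : mink w (d.n v) = mink (deriv d.n v) (d.n v)
          + d.kappa v * mink (d.t v) (d.n v) := by
        simp [hwdef, mink]; ring
      have htn' : mink (d.t v) (d.n v) = 0 := d.htn v hv
      rw [hexp, mink_comm' (deriv d.n v) (d.n v), d.mink_n_dn hv, htn']
      ring
  funext i
  have h := congrFun hw i
  simp only [hwdef, Pi.zero_apply] at h
  linarith

lemma kappa_diffAt {v : ℝ} (hv : v ∈ d.J) : DifferentiableAt ℝ d.kappa v :=
  (hasDerivAt_mink (d.dt_diffAt hv).hasDerivAt (d.n_diffAt hv).hasDerivAt).differentiableAt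

lemma kappa_contOn : ContinuousOn d.kappa d.J :=
  fun v hv => (d.kappa_diffAt hv).continuousAt.continuousWithinAt

lemma unit1 {u : ℝ} (hu : u ∈ d.I) :
    deriv d.f u * deriv (deriv d.f) u + deriv d.g u * deriv (deriv d.g) u = 0 := by
  have hd : deriv (fun w => deriv d.f w ^ 2 + deriv d.g w ^ 2) u = _ :=
    (((d.df_diffAt hu).hasDerivAt.pow 2).add ((d.dg_diffAt hu).hasDerivAt.pow 2)).deriv
  have h0 : deriv (fun w => deriv d.f w ^ 2 + deriv d.g w ^ 2) u = 0 := by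
    have he : (fun w => deriv d.f w ^ 2 + deriv d.g w ^ 2) =ᶠ[nhds u] fun _ => (1:ℝ) :=
      Filter.eventuallyEq_of_mem (d.hI.mem_nhds hu) d.hunit
    rw [he.deriv_eq, deriv_const]
  rw [hd] at h0
  norm_num at h0
  linarith

lemma unit2 {u : ℝ} (hu : u ∈ d.I) :
    deriv (deriv d.f) u ^ 2 + deriv d.f u * deriv (deriv (deriv d.f)) u
      + deriv (deriv d.g) u ^ 2 + deriv d.g u * deriv (deriv (deriv d.g)) u = 0 := by
  have hd : deriv (fun w => deriv d.f w * deriv (deriv d.f) w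
      + deriv d.g w * deriv (deriv d.g) w) u = _ :=
    (((d.df_diffAt hu).hasDerivAt.mul (d.d2f_diffAt hu).hasDerivAt).add
    ((d.dg_diffAt hu).hasDerivAt.mul (d.d2g_diffAt hu).hasDerivAt)).deriv
  have h0 : deriv (fun w => deriv d.f w * deriv (deriv d.f) w
      + deriv d.g w * deriv (deriv d.g) w) u = 0 := by
    have he : (fun w => deriv d.f w * deriv (deriv d.f) w + deriv d.g w * deriv (deriv d.g) w)
        =ᶠ[nhds u] fun _ => (0:ℝ) :=
      Filter.eventuallyEq_of_mem (d.hI.mem_nhds hu) (fun w hw => d.unit1 hw)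
    rw [he.deriv_eq, deriv_const]
  rw [hd] at h0
  nlinarith [h0]

lemma G_as (u v : ℝ) :
    d.G u v = deriv d.f u • wedge (d.l v) (d.t v) + deriv d.g u • wedge e1 (d.t v) := by
  funext i j
  simp only [G, x, wedge, Pi.add_apply, Pi.smul_apply, smul_eq_mul]
  ring

lemma hasDerivAt_G_u {u : ℝ} (v : ℝ) (hu : u ∈ d.I) :
    HasDerivAt (fun u' => d.G u' v)
      (deriv (deriv d.f) u • wedge (d.l v) (d.t v)
        + deriv (deriv d.g) u • wedge e1 (d.t v)) u := by
  have hrw : (fun u' => d.G u' v) = fun u' =>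
      deriv d.f u' • wedge (d.l v) (d.t v) + deriv d.g u' • wedge e1 (d.t v) :=
    funext fun u' => d.G_as u' v
  rw [hrw]
  exact ((d.df_diffAt hu).hasDerivAt.smul_const _).add ((d.dg_diffAt hu).hasDerivAt.smul_const _)

lemma deriv_G_u {u : ℝ} (v : ℝ) (hu : u ∈ d.I) :
    deriv (fun u' => d.G u' v) u
      = deriv (deriv d.f) u • wedge (d.l v) (d.t v) + deriv (deriv d.g) u • wedge e1 (d.t v) :=
  (d.hasDerivAt_G_u v hu).deriv

lemma deriv2_G_u {u : ℝ} (v : ℝ) (hu : u ∈ d.I) :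
    deriv (fun u' => deriv (fun u'' => d.G u'' v) u') u
      = deriv (deriv (deriv d.f)) u • wedge (d.l v) (d.t v)
        + deriv (deriv (deriv d.g)) u • wedge e1 (d.t v) := by
  have he : (fun u' => deriv (fun u'' => d.G u'' v) u') =ᶠ[nhds u]
      (fun u' => deriv (deriv d.f) u' • wedge (d.l v) (d.t v)
        + deriv (deriv d.g) u' • wedge e1 (d.t v)) :=
    Filter.eventuallyEq_of_mem (d.hI.mem_nhds hu) (fun u' hu' => d.deriv_G_u v hu')
  rw [he.deriv_eq]
  exact (((d.d2f_diffAt hu).hasDerivAt.smul_const _).add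
    ((d.d2g_diffAt hu).hasDerivAt.smul_const _)).deriv

lemma hasDerivAt_G_v (u : ℝ) {v : ℝ} (hv : v ∈ d.J) :
    HasDerivAt (fun v' => d.G u v')
      ((-(deriv d.f u * d.kappa v)) • wedge (d.l v) (d.n v)
        + (-(deriv d.g u)) • wedge e1 (d.l v)
        + (-(deriv d.g u * d.kappa v)) • wedge e1 (d.n v)) v := by
  have hx : HasDerivAt (fun v' => d.x u v') (deriv d.f u • d.t v) v :=
    ((d.l_diffAt hv).hasDerivAt.const_smul (deriv d.f u)).add_const (deriv d.g u • e1)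
  have ht : HasDerivAt d.t (deriv d.t v) v := (d.t_diffAt hv).hasDerivAt
  have h := hasDerivAt_wedge hx ht
  have heq : wedge (deriv d.f u • d.t v) (d.t v) + wedge (d.x u v) (deriv d.t v)
      = (-(deriv d.f u * d.kappa v)) • wedge (d.l v) (d.n v)
        + (-(deriv d.g u)) • wedge e1 (d.l v)
        + (-(deriv d.g u * d.kappa v)) • wedge e1 (d.n v) := by
    funext i j
    simp only [d.frenet_t hv, wedge, x, Pi.add_apply, Pi.smul_apply, smul_eq_mul, Pi.neg_apply,
      neg_mul]
    ring
  exact h.congr_deriv heq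

lemma deriv_G_v (u : ℝ) {v : ℝ} (hv : v ∈ d.J) :
    deriv (fun v' => d.G u v') v
      = (-(deriv d.f u * d.kappa v)) • wedge (d.l v) (d.n v)
        + (-(deriv d.g u)) • wedge e1 (d.l v)
        + (-(deriv d.g u * d.kappa v)) • wedge e1 (d.n v) :=
  (d.hasDerivAt_G_v u hv).deriv

lemma deriv2_G_v (u : ℝ) {v : ℝ} (hv : v ∈ d.J) :
    deriv (fun v' => deriv (fun v'' => d.G u v'') v') v
      = (deriv d.f u * d.kappa v ^ 2) • wedge (d.l v) (d.t v)
        + (deriv d.g u * d.kappa v ^ 2 - deriv d.g u) • wedge e1 (d.t v)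
        + (-(deriv d.f u * deriv d.kappa v)) • wedge (d.l v) (d.n v)
        + (-(deriv d.f u * d.kappa v)) • wedge (d.t v) (d.n v)
        + (-(deriv d.g u * deriv d.kappa v)) • wedge e1 (d.n v) := by
  have he : (fun v' => deriv (fun v'' => d.G u v'') v') =ᶠ[nhds v]
      (fun v' => (-(deriv d.f u * d.kappa v')) • wedge (d.l v') (d.n v')
        + (-(deriv d.g u)) • wedge e1 (d.l v')
        + (-(deriv d.g u * d.kappa v')) • wedge e1 (d.n v')) :=
    Filter.eventuallyEq_of_mem (d.hJ.mem_nhds hv) (fun v' hv' => d.deriv_G_v u hv')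
  rw [he.deriv_eq]
  have hκ : HasDerivAt d.kappa (deriv d.kappa v) v := (d.kappa_diffAt hv).hasDerivAt
  have hc1 : HasDerivAt (fun v' => -(deriv d.f u * d.kappa v'))
      (-(deriv d.f u * deriv d.kappa v)) v := (hκ.const_mul (deriv d.f u)).neg
  have hc3 : HasDerivAt (fun v' => -(deriv d.g u * d.kappa v'))
      (-(deriv d.g u * deriv d.kappa v)) v := (hκ.const_mul (deriv d.g u)).neg
  have hln : HasDerivAt (fun v' => wedge (d.l v') (d.n v'))
      (wedge (deriv d.l v) (d.n v) + wedge (d.l v) (deriv d.n v)) v :=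
    hasDerivAt_wedge (d.l_diffAt hv).hasDerivAt (d.n_diffAt hv).hasDerivAt
  have he1l : HasDerivAt (fun v' => wedge e1 (d.l v'))
      (wedge (0 : Fin 4 → ℝ) (d.l v) + wedge e1 (deriv d.l v)) v :=
    hasDerivAt_wedge (hasDerivAt_const v e1) (d.l_diffAt hv).hasDerivAt
  have he1n : HasDerivAt (fun v' => wedge e1 (d.n v'))
      (wedge (0 : Fin 4 → ℝ) (d.n v) + wedge e1 (deriv d.n v)) v :=
    hasDerivAt_wedge (hasDerivAt_const v e1) (d.n_diffAt hv).hasDerivAt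
  have hbig := ((hc1.smul hln).add (he1l.const_smul (-(deriv d.g u)))).add (hc3.smul he1n)
  refine (hbig.congr_deriv ?_).deriv
  have hlt_eq : deriv d.l v = d.t v := rfl
  funext i j
  simp only [hlt_eq, d.frenet_t hv, d.frenet_n hv, wedge, Pi.add_apply, Pi.smul_apply,
    smul_eq_mul, Pi.neg_apply, Pi.zero_apply, neg_mul]
  ring

lemma lapG_eq {u v : ℝ} (hu : u ∈ d.I) (hv : v ∈ d.J) :
    d.lapG u v = (-(1 / d.f u ^ 2)) • (
      (deriv (deriv (deriv d.f)) u * d.f u ^ 2 + deriv d.f u * d.kappa v ^ 2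
        + deriv d.f u * deriv (deriv d.f) u * d.f u) • wedge (d.l v) (d.t v)
      + (deriv (deriv (deriv d.g)) u * d.f u ^ 2 + deriv d.g u * d.kappa v ^ 2 - deriv d.g u
        + deriv d.f u * deriv (deriv d.g) u * d.f u) • wedge e1 (d.t v)
      + (-(deriv d.f u * deriv d.kappa v)) • wedge (d.l v) (d.n v)
      + (-(deriv d.f u * d.kappa v)) • wedge (d.t v) (d.n v)
      + (-(deriv d.g u * deriv d.kappa v)) • wedge e1 (d.n v)) := by
  have hf0 : d.f u ≠ 0 := (d.hfpos u hu).ne'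
  show -(deriv (fun u' => deriv (fun u'' => d.G u'' v) u') u
    + (1 / (d.f u) ^ 2) • deriv (fun v' => deriv (fun v'' => d.G u v'') v') v
    + (deriv d.f u / d.f u) • deriv (fun u' => d.G u' v) u) = _
  rw [d.deriv2_G_u v hu, d.deriv2_G_v u hv, d.deriv_G_u v hu]
  funext i j
  simp only [Pi.add_apply, Pi.smul_apply, Pi.neg_apply, smul_eq_mul, wedge]
  field_simp
  ring

lemma coeffs_zero {v : ℝ} (hv : v ∈ d.J) {A B C D E : ℝ}
    (h : A • wedge (d.l v) (d.t v) + B • wedge e1 (d.t v) + C • wedge (d.l v) (d.n v)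
       + D • wedge (d.t v) (d.n v) + E • wedge e1 (d.n v) = 0) :
    A = 0 ∧ B = 0 ∧ C = 0 ∧ D = 0 ∧ E = 0 := by
  have hne1 : (1:Fin 4) ≠ 0 := by decide
  have hne2 : (2:Fin 4) ≠ 0 := by decide
  have hne3 : (3:Fin 4) ≠ 0 := by decide
  have me1x : ∀ x : Fin 4 → ℝ, mink e1 x = x 0 := fun x => by simp [mink, e1, hne1, hne2, hne3]
  have mxe1 : ∀ x : Fin 4 → ℝ, mink x e1 = x 0 := fun x => by simp [mink, e1, hne1, hne2, hne3]
  have he10 : e1 0 = (1:ℝ) := by norm_num [e1]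
  have hl0 := d.hlplane v hv
  have ht0 := d.t_zero hv
  have hn0 := d.hnplane v hv
  have hll : mink (d.l v) (d.l v) = 1 := d.hll v hv
  have htt : mink (d.t v) (d.t v) = 1 := d.htt v hv
  have hnn : mink (d.n v) (d.n v) = -1 := d.hnn v hv
  have hlt := d.mink_lt hv
  have htl : mink (d.t v) (d.l v) = 0 := by rw [mink_comm']; exact hlt
  have hln : mink (d.l v) (d.n v) = 0 := d.hln v hv
  have hnl : mink (d.n v) (d.l v) = 0 := by rw [mink_comm']; exact hln
  have htn : mink (d.t v) (d.n v) = 0 := d.htn v hv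
  have hnt : mink (d.n v) (d.t v) = 0 := by rw [mink_comm']; exact htn
  have key : ∀ c dd : Fin 4 → ℝ,
      A * phi4 c dd (wedge (d.l v) (d.t v)) + B * phi4 c dd (wedge e1 (d.t v))
        + C * phi4 c dd (wedge (d.l v) (d.n v)) + D * phi4 c dd (wedge (d.t v) (d.n v))
        + E * phi4 c dd (wedge e1 (d.n v)) = 0 := by
    intro c dd
    rw [← phi4_five, h, phi4_zero]
  have hA := key (d.l v) (d.t v)
  have hB := key e1 (d.t v)
  have hC := key (d.l v) (d.n v)
  have hD := key (d.t v) (d.n v)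
  have hE := key e1 (d.n v)
  simp only [phi4_wedge, me1x, mxe1, he10, hl0, ht0, hn0, hll, htt, hnn, hlt, htl, hln, hnl,
    htn, hnt] at hA hB hC hD hE
  refine ⟨by linarith, by linarith, by linarith, by linarith, by linarith⟩

lemma hasDerivAt_z_u {u : ℝ} (v : ℝ) (hu : u ∈ d.I) :
    HasDerivAt (fun u' => d.z u' v) (deriv d.f u • d.l v + deriv d.g u • e1) u :=
  ((d.f_diffAt hu).hasDerivAt.smul_const _).add ((d.g_diffAt hu).hasDerivAt.smul_const _)

lemma deriv_z_u {u : ℝ} (v : ℝ) (hu : u ∈ d.I) :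
    deriv (fun u' => d.z u' v) u = deriv d.f u • d.l v + deriv d.g u • e1 :=
  (d.hasDerivAt_z_u v hu).deriv

lemma deriv2_z_u {u : ℝ} (v : ℝ) (hu : u ∈ d.I) :
    deriv (fun u' => deriv (fun u'' => d.z u'' v) u') u
      = deriv (deriv d.f) u • d.l v + deriv (deriv d.g) u • e1 := by
  have he : (fun u' => deriv (fun u'' => d.z u'' v) u') =ᶠ[nhds u]
      (fun u' => deriv d.f u' • d.l v + deriv d.g u' • e1) :=
    Filter.eventuallyEq_of_mem (d.hI.mem_nhds hu) (fun u' hu' => d.deriv_z_u v hu')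
  rw [he.deriv_eq]
  have h : HasDerivAt (fun u' => deriv d.f u' • d.l v + deriv d.g u' • e1)
      (deriv (deriv d.f) u • d.l v + deriv (deriv d.g) u • e1) u :=
    ((d.df_diffAt hu).hasDerivAt.smul_const _).add ((d.dg_diffAt hu).hasDerivAt.smul_const _)
  exact h.deriv

lemma deriv_z_v (u : ℝ) {v : ℝ} (hv : v ∈ d.J) :
    deriv (fun v' => d.z u v') v = d.f u • d.t v := by
  have h : HasDerivAt (fun v' => d.z u v') (d.f u • d.t v) v :=
    ((d.l_diffAt hv).hasDerivAt.const_smul (d.f u)).add_const (d.g u • e1)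
  exact h.deriv

lemma deriv2_z_v (u : ℝ) {v : ℝ} (hv : v ∈ d.J) :
    deriv (fun v' => deriv (fun v'' => d.z u v'') v') v = d.f u • deriv d.t v := by
  have he : (fun v' => deriv (fun v'' => d.z u v'') v') =ᶠ[nhds v]
      (fun v' => d.f u • d.t v') :=
    Filter.eventuallyEq_of_mem (d.hJ.mem_nhds hv) (fun v' hv' => d.deriv_z_v u hv')
  rw [he.deriv_eq]
  exact ((d.t_diffAt hv).hasDerivAt.const_smul (d.f u)).deriv

end HyperbolicData

/-- **Meridian surfaces of hyperbolic type with harmonic Gauss map** (Theorem 4.2):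
`ΔG = 0` at every point of `I × J` if and only if either
(i) `κ ≡ 0` on `J` and `g′ ≡ 0` on `I` (and then `κ_m ≡ 0`, the surface is part of a
plane), or
(ii) there are constants `a > 0` and `ε, δ ∈ {−1,1}` with `f ≡ a`, `g′ ≡ ε` on `I` and
`κ ≡ δ` on `J`.
Moreover, in case (ii) the mean curvature vector satisfies `H = −(1/(2a))·(l + δ·n)`,
`⟨H,H⟩ = 0` and `H ≠ 0` at every point (the surface is marginally trapped). -/
theorem harmonic_gauss_map_hyperbolic (d : HyperbolicData) :
    ((∀ u ∈ d.I, ∀ v ∈ d.J, d.lapG u v = 0) ↔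
      (((∀ v ∈ d.J, d.kappa v = 0) ∧ (∀ u ∈ d.I, deriv d.g u = 0)) ∨
        (∃ a : ℝ, 0 < a ∧ ∃ ε : ℝ, (ε = -1 ∨ ε = 1) ∧ ∃ δ : ℝ, (δ = -1 ∨ δ = 1) ∧
          (∀ u ∈ d.I, d.f u = a) ∧ (∀ u ∈ d.I, deriv d.g u = ε) ∧
          (∀ v ∈ d.J, d.kappa v = δ)))) ∧
    (((∀ v ∈ d.J, d.kappa v = 0) ∧ (∀ u ∈ d.I, deriv d.g u = 0)) →
      ∀ u ∈ d.I, d.kappaM u = 0) ∧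
    (∀ a : ℝ, 0 < a → ∀ ε : ℝ, (ε = -1 ∨ ε = 1) → ∀ δ : ℝ, (δ = -1 ∨ δ = 1) →
      (∀ u ∈ d.I, d.f u = a) → (∀ u ∈ d.I, deriv d.g u = ε) → (∀ v ∈ d.J, d.kappa v = δ) →
      ∀ u ∈ d.I, ∀ v ∈ d.J,
        d.H u v = (-(1 / (2 * a))) • (d.l v + δ • d.n v) ∧
        mink (d.H u v) (d.H u v) = 0 ∧
        d.H u v ≠ 0) := by
  obtain ⟨u₀, hu₀⟩ := d.hIne
  obtain ⟨v₀, hv₀⟩ := d.hJne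
  have hconvI : Convex ℝ d.I := convex_iff_ordConnected.mpr d.hIconn
  refine ⟨⟨?_, ?_⟩, ?_, ?_⟩
  · -- forward direction
    intro h
    have hE : ∀ u ∈ d.I, ∀ v ∈ d.J,
        (deriv (deriv (deriv d.f)) u * d.f u ^ 2 + deriv d.f u * d.kappa v ^ 2
          + deriv d.f u * deriv (deriv d.f) u * d.f u = 0) ∧
        (deriv (deriv (deriv d.g)) u * d.f u ^ 2 + deriv d.g u * d.kappa v ^ 2 - deriv d.g u
          + deriv d.f u * deriv (deriv d.g) u * d.f u = 0) ∧
        (-(deriv d.f u * deriv d.kappa v) = 0) ∧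
        (-(deriv d.f u * d.kappa v) = 0) ∧
        (-(deriv d.g u * deriv d.kappa v) = 0) := by
      intro u hu v hv
      have h0 := h u hu v hv
      rw [d.lapG_eq hu hv] at h0
      have hpos : (0:ℝ) < 1 / d.f u ^ 2 := one_div_pos.mpr (pow_pos (d.hfpos u hu) 2)
      rcases smul_eq_zero.mp h0 with hbad | hS
      · rw [neg_eq_zero] at hbad
        rw [hbad] at hpos
        exact absurd hpos (lt_irrefl 0)
      · exact d.coeffs_zero hv hS
    by_cases hκ0 : ∀ v ∈ d.J, d.kappa v = 0
    · left
      refine ⟨hκ0, fun u hu => ?_⟩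
      obtain ⟨hA, hB, -, -, -⟩ := hE u hu v₀ hv₀
      rw [hκ0 v₀ hv₀] at hA hB
      have hp1 := d.unit1 hu
      have hp2 := d.unit2 hu
      have hfpos := d.hfpos u hu
      have hkey : deriv d.g u ^ 2
          + (deriv (deriv d.f) u ^ 2 + deriv (deriv d.g) u ^ 2) * d.f u ^ 2 = 0 := by
        linear_combination (-(deriv d.f u)) * hA + (-(deriv d.g u)) * hB
          + (deriv d.f u * d.f u) * hp1 + (d.f u ^ 2) * hp2
      have h1 : deriv d.g u ^ 2 ≤ 0 := by
        nlinarith [sq_nonneg (deriv (deriv d.f) u), sq_nonneg (deriv (deriv d.g) u),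
          sq_nonneg (d.f u)]
      have h2 : deriv d.g u ^ 2 = 0 := le_antisymm h1 (sq_nonneg _)
      exact (pow_eq_zero_iff (by norm_num : (2:ℕ) ≠ 0)).mp h2
    · right
      push_neg at hκ0
      obtain ⟨v₁, hv₁, hκv₁⟩ := hκ0
      have hf'0 : ∀ u ∈ d.I, deriv d.f u = 0 := by
        intro u hu
        obtain ⟨-, -, -, hD, -⟩ := hE u hu v₁ hv₁
        have hD' : deriv d.f u * d.kappa v₁ = 0 := by linarith
        rcases mul_eq_zero.mp hD' with h' | h'
        · exact h'
        · exact absurd h' hκv₁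
      have hfa : ∀ u ∈ d.I, d.f u = d.f u₀ :=
        fun u hu => constOn d.hI hconvI (fun w hw => d.f_diffAt hw) hf'0 hu hu₀
      have hg21 : ∀ u ∈ d.I, deriv d.g u ^ 2 = 1 := by
        intro u hu
        have h' := d.hunit u hu
        rw [hf'0 u hu] at h'
        linear_combination h'
      have hgε : ∀ u ∈ d.I, deriv d.g u = deriv d.g u₀ :=
        fun u hu => pm_one_const d.hIconn d.dg_smooth.continuousOn hg21 hu hu₀
      have hε := pm_one_eq (hg21 u₀ hu₀)
      have hεne : deriv d.g u₀ ≠ 0 := by rcases hε with h' | h' <;> rw [h'] <;> norm_num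
      have hg2z : ∀ u ∈ d.I, deriv (deriv d.g) u = 0 :=
        fun u hu => deriv_zero_of_eqOn d.hI hgε hu
      have hg3z : deriv (deriv (deriv d.g)) u₀ = 0 := deriv_zero_of_eqOn d.hI hg2z hu₀
      have hκ21 : ∀ v ∈ d.J, d.kappa v ^ 2 = 1 := by
        intro v hv
        obtain ⟨-, hB, -, -, -⟩ := hE u₀ hu₀ v hv
        rw [hg3z, hf'0 u₀ hu₀] at hB
        have hBB : deriv d.g u₀ * (d.kappa v ^ 2 - 1) = 0 := by linear_combination hB
        rcases mul_eq_zero.mp hBB with h' | h'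
        · exact absurd h' hεne
        · linarith
      have hκδ : ∀ v ∈ d.J, d.kappa v = d.kappa v₀ :=
        fun v hv => pm_one_const d.hJconn d.kappa_contOn hκ21 hv hv₀
      have hδ := pm_one_eq (hκ21 v₀ hv₀)
      exact ⟨d.f u₀, d.hfpos u₀ hu₀, deriv d.g u₀, hε, d.kappa v₀, hδ, hfa, hgε, hκδ⟩
  · -- backward direction
    rintro (⟨hκ, hg⟩ | ⟨a, ha, ε, hε, δ, hδ, hfa, hgε, hκδ⟩) u hu v hv
    · have hg2 : ∀ w ∈ d.I, deriv (deriv d.g) w = 0 :=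
        fun w hw => deriv_zero_of_eqOn d.hI hg hw
      have hg3 : deriv (deriv (deriv d.g)) u = 0 := deriv_zero_of_eqOn d.hI hg2 hu
      have hf2 : ∀ w ∈ d.I, deriv (deriv d.f) w = 0 := by
        intro w hw
        have hsq : deriv d.f w ^ 2 = 1 := by
          have h' := d.hunit w hw
          rw [hg w hw] at h'
          linear_combination h'
        have hne : deriv d.f w ≠ 0 := by
          intro hh; rw [hh] at hsq; norm_num at hsq
        have h1 := d.unit1 hw
        rw [hg w hw] at h1
        have h2 : deriv d.f w * deriv (deriv d.f) w = 0 := by linarith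
        rcases mul_eq_zero.mp h2 with h' | h'
        · exact absurd h' hne
        · exact h'
      have hf3 : deriv (deriv (deriv d.f)) u = 0 := deriv_zero_of_eqOn d.hI hf2 hu
      have hκv : d.kappa v = 0 := hκ v hv
      have hκ' : deriv d.kappa v = 0 := deriv_zero_of_eqOn d.hJ hκ hv
      rw [d.lapG_eq hu hv, hκv, hκ', hf3, hg3, hf2 u hu, hg2 u hu, hg u hu]
      simp
    · have hf'0 : ∀ w ∈ d.I, deriv d.f w = 0 :=
        fun w hw => deriv_zero_of_eqOn d.hI hfa hw
      have hf2 : ∀ w ∈ d.I, deriv (deriv d.f) w = 0 :=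
        fun w hw => deriv_zero_of_eqOn d.hI hf'0 hw
      have hf3 : deriv (deriv (deriv d.f)) u = 0 := deriv_zero_of_eqOn d.hI hf2 hu
      have hg2 : ∀ w ∈ d.I, deriv (deriv d.g) w = 0 :=
        fun w hw => deriv_zero_of_eqOn d.hI hgε hw
      have hg3 : deriv (deriv (deriv d.g)) u = 0 := deriv_zero_of_eqOn d.hI hg2 hu
      have hκ' : deriv d.kappa v = 0 := deriv_zero_of_eqOn d.hJ hκδ hv
      have hδ2 : δ ^ 2 = 1 := by rcases hδ with h' | h' <;> rw [h'] <;> norm_num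
      rw [d.lapG_eq hu hv, hκδ v hv, hκ', hf3, hg3, hf2 u hu, hg2 u hu, hf'0 u hu,
        hgε u hu, hδ2]
      simp
  · -- flat case
    rintro ⟨hκ, hg⟩ u hu
    have hg2 : deriv (deriv d.g) u = 0 := deriv_zero_of_eqOn d.hI hg hu
    simp [HyperbolicData.kappaM, hg2, hg u hu]
  · -- marginally trapped case
    intro a ha ε hε δ hδ hfa hgε hκδ u hu v hv
    have hane : a ≠ 0 := ha.ne'
    have hf'0 : ∀ w ∈ d.I, deriv d.f w = 0 :=
      fun w hw => deriv_zero_of_eqOn d.hI hfa hw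
    have hf2 : deriv (deriv d.f) u = 0 := deriv_zero_of_eqOn d.hI hf'0 hu
    have hg2 : deriv (deriv d.g) u = 0 := deriv_zero_of_eqOn d.hI hgε hu
    have hHeq : d.H u v = (-(1 / (2 * a))) • (d.l v + δ • d.n v) := by
      show (1 / 2 : ℝ) • (deriv (fun u' => deriv (fun u'' => d.z u'' v) u') u
        + (1 / (d.f u) ^ 2) • deriv (fun v' => deriv (fun v'' => d.z u v'') v') v
        + (deriv d.f u / d.f u) • deriv (fun u' => d.z u' v) u) = _
      rw [d.deriv2_z_u v hu, d.deriv2_z_v u hv, d.deriv_z_u v hu, d.frenet_t hv,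
        hκδ v hv, hf2, hg2, hf'0 u hu, hfa u hu, hgε u hu]
      funext i
      simp only [Pi.add_apply, Pi.smul_apply, smul_eq_mul, Pi.neg_apply]
      field_simp
      ring
    refine ⟨hHeq, ?_, ?_⟩
    · rw [hHeq]
      have hll := d.hll v hv
      have hln := d.hln v hv
      have hnn := d.hnn v hv
      simp only [mink, Pi.add_apply, Pi.smul_apply, smul_eq_mul] at hll hln hnn ⊢
      rcases hδ with h' | h' <;> subst h'
      · linear_combination (1 / (2*a))^2 * hll - 2 * (1/(2*a))^2 * hln + (1/(2*a))^2 * hnn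
      · linear_combination (1 / (2*a))^2 * hll + 2 * (1/(2*a))^2 * hln + (1/(2*a))^2 * hnn
    · intro h0
      rw [hHeq] at h0
      rcases smul_eq_zero.mp h0 with hb | hb
      · have hpos : (0:ℝ) < 1 / (2 * a) := one_div_pos.mpr (by linarith)
        rw [neg_eq_zero] at hb
        rw [hb] at hpos
        exact absurd hpos (lt_irrefl 0)
      · have h2 : mink (d.l v + δ • d.n v) (d.l v) = 0 := by rw [hb]; simp [mink]
        have hll := d.hll v hv
        have hnl : mink (d.n v) (d.l v) = 0 := by rw [mink_comm']; exact d.hln v hv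
        simp only [mink, Pi.add_apply, Pi.smul_apply, smul_eq_mul] at hll hnl h2
        have hfalse : (0:ℝ) = 1 := by linear_combination -h2 + hll + δ * hnl
        norm_num at hfalse
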